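/- arXiv:1506.06829 — 2 statements merged into one kernel-verified Lean document; each statement's English description precedes it below -/
import Mathlib

section
/- For any regular pair (A, B) of n-by-n complex matrices admitting a partial generalized Schur decomposition A V = Q R_A, B V = Q R_B with V, Q ∈ ℂ^{n×k} having orthonormal columns and R_A, R_B ∈ ℂ^{k×k} upper triangular, there exist upper triangular matrices M_A, M_B ∈ ℂ^{k×k} such that A V M_B = B V M_A, and for each j the ratio M_A(j,j)/M_B(j,j) equals R_A(j,j)/R_B(j,j) (interpreted projectively: M_A(j,j) R_B(j,j) = M_B(j,j) R_A(j,j) with (M_A(j,j), M_B(j,j)) ≠ (0,0)). -/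
open Matrix

private lemma diag_mul_tri {k : ℕ} {M N : Matrix (Fin k) (Fin k) ℂ}
    (hM : M.BlockTriangular id) (hN : N.BlockTriangular id) (j : Fin k) :
    (M * N) j j = M j j * N j j := by
  rw [Matrix.mul_apply]
  refine Finset.sum_eq_single j (fun l _ hl => ?_) (by simp)
  rcases lt_or_gt_of_ne hl with h | h
  · rw [hM (show (id l : Fin k) < id j from h), zero_mul]
  · rw [hN (show (id j : Fin k) < id l from h), mul_zero]

theorem stmt3 {n k : ℕ} (A B : Matrix (Fin n) (Fin n) ℂ)
    (V Q : Matrix (Fin n) (Fin k) ℂ) (RA RB : Matrix (Fin k) (Fin k) ℂ)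
    (hreg : ∃ α β : ℂ, (β • A + α • B).det ≠ 0)
    (hV : Vᴴ * V = 1) (hQ : Qᴴ * Q = 1)
    (hRA : RA.BlockTriangular id) (hRB : RB.BlockTriangular id)
    (hA : A * V = Q * RA) (hB : B * V = Q * RB) :
    ∃ MA MB : Matrix (Fin k) (Fin k) ℂ,
      MA.BlockTriangular id ∧ MB.BlockTriangular id ∧
      A * V * MB = B * V * MA ∧
      ∀ j, MA j j * RB j j = MB j j * RA j j ∧ ¬(MA j j = 0 ∧ MB j j = 0) := by
  -- Step 1: regularity implies (RA j j, RB j j) ≠ (0,0) for all j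
  obtain ⟨α, β, hαβ⟩ := hreg
  have hpair : ∀ j, ¬(RA j j = 0 ∧ RB j j = 0) := by
    rintro j ⟨hA0, hB0⟩
    set M : Matrix (Fin k) (Fin k) ℂ := β • RA + α • RB with hM
    have hMtri : M.BlockTriangular id := by
      intro i l h
      simp [hM, hRA h, hRB h]
    have hMdet : M.det = 0 := by
      rw [Matrix.det_of_upperTriangular hMtri]
      refine Finset.prod_eq_zero (Finset.mem_univ j) ?_
      simp [hM, hA0, hB0]
    obtain ⟨x, hx0, hxM⟩ := (Matrix.exists_mulVec_eq_zero_iff).2 hMdet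
    have hVx : V *ᵥ x ≠ 0 := by
      intro h
      apply hx0
      have := congrArg (fun y => Vᴴ *ᵥ y) h
      simpa [Matrix.mulVec_mulVec, hV] using this
    have key : (β • A + α • B) *ᵥ (V *ᵥ x) = 0 := by
      have h1 : (β • A + α • B) * V = Q * M := by
        rw [Matrix.add_mul, Matrix.smul_mul, Matrix.smul_mul, hA, hB, hM,
          Matrix.mul_add, Matrix.mul_smul, Matrix.mul_smul]
      rw [Matrix.mulVec_mulVec, h1, ← Matrix.mulVec_mulVec, hxM, Matrix.mulVec_zero]
    obtain ⟨y, hy0, hyM⟩ : ∃ y, y ≠ 0 ∧ (β • A + α • B) *ᵥ y = 0 :=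
      ⟨V *ᵥ x, hVx, key⟩
    exact hαβ ((Matrix.exists_mulVec_eq_zero_iff).1 ⟨y, hy0, hyM⟩)
  -- Step 2: choose t with RB j j + t * RA j j ≠ 0 for all j
  obtain ⟨t, ht⟩ := Infinite.exists_notMem_finset
    (Finset.univ.image fun j : Fin k => -RB j j / RA j j)
  set S : Matrix (Fin k) (Fin k) ℂ := RB + t • RA with hS
  have hStri : S.BlockTriangular id := by
    intro i l h; simp [hS, hRA h, hRB h]
  have hSdiag : ∀ j, S j j = RB j j + t * RA j j := by intro j; simp [hS]
  have hSd : ∀ j, S j j ≠ 0 := by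
    intro j h
    rw [hSdiag j] at h
    by_cases hra : RA j j = 0
    · exact hpair j ⟨hra, by simpa [hra] using h⟩
    · apply ht
      refine Finset.mem_image.2 ⟨j, Finset.mem_univ j, ?_⟩
      field_simp
      linear_combination -h
  have hSdet : S.det ≠ 0 := by
    rw [Matrix.det_of_upperTriangular hStri]
    exact Finset.prod_ne_zero_iff.2 fun j _ => hSd j
  have hSunit : IsUnit S.det := isUnit_iff_ne_zero.2 hSdet
  have hSinv : S * S⁻¹ = 1 := Matrix.mul_nonsing_inv S hSunit
  have hSinv' : S⁻¹ * S = 1 := Matrix.nonsing_inv_mul S hSunit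
  have : Invertible S := S.invertibleOfIsUnitDet hSunit
  have hSitri : S⁻¹.BlockTriangular id :=
    Matrix.blockTriangular_inv_of_blockTriangular hStri
  set MA : Matrix (Fin k) (Fin k) ℂ := S⁻¹ * (RA * S) with hMA
  set MB : Matrix (Fin k) (Fin k) ℂ := S - t • MA with hMB
  have hMAtri : MA.BlockTriangular id := hSitri.mul (hRA.mul hStri)
  have hMBtri : MB.BlockTriangular id := by
    intro i l h; simp [hMB, hStri h, hMAtri h]
  have hMAdiag : ∀ j, MA j j = RA j j := by
    intro j
    rw [hMA, diag_mul_tri hSitri (hRA.mul hStri), diag_mul_tri hRA hStri]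
    have h1 : S⁻¹ j j * S j j = 1 := by
      rw [← diag_mul_tri hSitri hStri, hSinv', Matrix.one_apply_eq]
    rw [show S⁻¹ j j * (RA j j * S j j) = S⁻¹ j j * S j j * RA j j from by ring,
      h1, one_mul]
  have hMBdiag : ∀ j, MB j j = RB j j := by
    intro j
    rw [hMB, Matrix.sub_apply, Matrix.smul_apply, hMAdiag j, hSdiag j,
      smul_eq_mul]
    ring
  refine ⟨MA, MB, hMAtri, hMBtri, ?_, fun j => ⟨by rw [hMAdiag, hMBdiag]; ring,
    fun ⟨h1, h2⟩ => hpair j ⟨by rwa [hMAdiag] at h1, by rwa [hMBdiag] at h2⟩⟩⟩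
  have hSMA : S * MA = RA * S := by
    rw [hMA, ← Matrix.mul_assoc, hSinv, Matrix.one_mul]
  have key : RA * MB = RB * MA := by
    have hRBS : RB = S - t • RA := by rw [hS]; abel
    rw [hMB, hRBS, Matrix.mul_sub, Matrix.sub_mul, Matrix.mul_smul,
      Matrix.smul_mul, hSMA]
  rw [hA, hB, Matrix.mul_assoc, Matrix.mul_assoc, key]
end

section
/- Let A V = Q R_A and B V = Q R_B with Q having linearly independent columns, and let G_1, G_2 be k-by-k upper triangular matrices such that G = R_A G_1 + R_B G_2 is invertible. Define M_A = G_2 G⁻¹ R_A and M_B = I - G_1 G⁻¹ R_A. Then A V M_B = B V M_A. -/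
open Matrix

theorem stmt4 {n k : ℕ} (A B : Matrix (Fin n) (Fin n) ℂ)
    (V Q : Matrix (Fin n) (Fin k) ℂ) (RA RB G1 G2 : Matrix (Fin k) (Fin k) ℂ)
    (hQind : LinearIndependent ℂ (fun j : Fin k => Qᵀ j))
    (hA : A * V = Q * RA) (hB : B * V = Q * RB)
    (hG1 : G1.BlockTriangular id) (hG2 : G2.BlockTriangular id)
    (hG : IsUnit (RA * G1 + RB * G2)) :
    A * V * (1 - G1 * (RA * G1 + RB * G2)⁻¹ * RA) =
      B * V * (G2 * (RA * G1 + RB * G2)⁻¹ * RA) := by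
  set G := RA * G1 + RB * G2 with hGdef
  have h1 : G * G⁻¹ = 1 :=
    mul_nonsing_inv _ ((isUnit_iff_isUnit_det _).mp hG)
  have key : RA * (G1 * G⁻¹ * RA) + RB * (G2 * G⁻¹ * RA) = RA := by
    have h2 : (RA * G1 + RB * G2) * (G⁻¹ * RA) = RA := by
      rw [← hGdef, ← mul_assoc, h1, one_mul]
    calc RA * (G1 * G⁻¹ * RA) + RB * (G2 * G⁻¹ * RA)
        = (RA * G1 + RB * G2) * (G⁻¹ * RA) := by rw [add_mul]; simp [mul_assoc]
      _ = RA := h2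
  rw [hA, hB, Matrix.mul_sub, Matrix.mul_one, sub_eq_iff_eq_add]
  calc Q * RA = Q * (RA * (G1 * G⁻¹ * RA) + RB * (G2 * G⁻¹ * RA)) := by rw [key]
    _ = Q * RB * (G2 * G⁻¹ * RA) + Q * RA * (G1 * G⁻¹ * RA) := by
        rw [Matrix.mul_add, add_comm]
        simp [Matrix.mul_assoc]
end
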